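/- arXiv:2002.03542 — 4 statements merged into one kernel-verified Lean document; each statement's English description precedes it below -/
import Mathlib

section
/- If p1 = x^σ(1-x)^τ and p2 = x^α(1-x)^β are pseudomonomials in a pseudomonomial ideal I of F2[x_1,...,x_n], and e ∈ σ ∩ β, then the pseudomonomial x^{(σ∪α)\e}(1-x)^{(τ∪β)\e} also lies in I. (Weak elimination for pseudomonomials.) -/
/-!
Since `x_e + (1 - x_e) = 1`, the target `P` is `x_e P + (1 - x_e) P`. Absorbing the extra factor
gives `x_e P = x^{σ∪α}(1-x)^{(τ∪β)∖e}`, a multiple of `p₁` because `e ∉ τ`, and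
`(1 - x_e) P = x^{(σ∪α)∖e}(1-x)^{τ∪β}`, a multiple of `p₂` because `e ∉ α`.
-/

open MvPolynomial

/-- The pseudomonomial `x^σ (1-x)^τ` in `𝔽₂[x_1,…,x_n]`. -/
noncomputable def pseudomonomial {n : ℕ} (σ τ : Finset (Fin n)) :
    MvPolynomial (Fin n) (ZMod 2) :=
  (∏ i ∈ σ, X i) * ∏ j ∈ τ, (1 - X j)

section Pseudomonomial

variable {n : ℕ}

theorem pseudomonomial_dvd_pseudomonomial {σ τ σ' τ' : Finset (Fin n)} (hσ : σ ⊆ σ')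
    (hτ : τ ⊆ τ') : pseudomonomial σ τ ∣ pseudomonomial σ' τ' :=
  mul_dvd_mul (Finset.prod_dvd_prod_of_subset _ _ _ hσ) (Finset.prod_dvd_prod_of_subset _ _ _ hτ)

theorem X_mul_pseudomonomial {σ : Finset (Fin n)} (τ : Finset (Fin n)) {e : Fin n} (he : e ∉ σ) :
    X e * pseudomonomial σ τ = pseudomonomial (insert e σ) τ := by
  rw [pseudomonomial, pseudomonomial, Finset.prod_insert he, mul_assoc]

theorem one_sub_X_mul_pseudomonomial (σ : Finset (Fin n)) {τ : Finset (Fin n)} {e : Fin n}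
    (he : e ∉ τ) : (1 - X e) * pseudomonomial σ τ = pseudomonomial σ (insert e τ) := by
  rw [pseudomonomial, pseudomonomial, Finset.prod_insert he, mul_left_comm]

end Pseudomonomial

/-- Weak elimination for pseudomonomials in an ideal. -/
theorem stmt0 {n : ℕ} (I : Ideal (MvPolynomial (Fin n) (ZMod 2)))
    (σ τ α β : Finset (Fin n)) (hστ : Disjoint σ τ) (hαβ : Disjoint α β)
    (e : Fin n) (heσ : e ∈ σ) (heβ : e ∈ β)
    (h1 : pseudomonomial σ τ ∈ I) (h2 : pseudomonomial α β ∈ I) :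
    pseudomonomial ((σ ∪ α).erase e) ((τ ∪ β).erase e) ∈ I := by
  have heτ : e ∉ τ := Finset.disjoint_left.mp hστ heσ
  have heα : e ∉ α := Finset.disjoint_right.mp hαβ heβ
  have hdvd1 : pseudomonomial σ τ ∣
      X e * pseudomonomial ((σ ∪ α).erase e) ((τ ∪ β).erase e) := by
    rw [X_mul_pseudomonomial _ (Finset.notMem_erase e _)]
    exact pseudomonomial_dvd_pseudomonomial
      (Finset.subset_insert_iff.mpr (Finset.erase_subset_erase e Finset.subset_union_left))
      (Finset.subset_erase.mpr ⟨Finset.subset_union_left, heτ⟩)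
  have hdvd2 : pseudomonomial α β ∣
      (1 - X e) * pseudomonomial ((σ ∪ α).erase e) ((τ ∪ β).erase e) := by
    rw [one_sub_X_mul_pseudomonomial _ (Finset.notMem_erase e _)]
    exact pseudomonomial_dvd_pseudomonomial
      (Finset.subset_erase.mpr ⟨Finset.subset_union_right, heα⟩)
      (Finset.subset_insert_iff.mpr (Finset.erase_subset_erase e Finset.subset_union_right))
  rw [← one_mul (pseudomonomial _ _), ← add_sub_cancel (X e) 1, add_mul]
  exact I.add_mem (I.mem_of_dvd hdvd1 h1) (I.mem_of_dvd hdvd2 h2)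
end

section
/- Let C ⊆ 2^{[n]} be a code, σ_1, ..., σ_m ⊆ [n], and define f: C → 2^{[m]} by f(c) = { i ∈ [m] : σ_i ⊆ c }. Then f is a morphism of codes from C to f(C): the preimage of every trunk of f(C) is a trunk of C. -/
/-- The trunk of `σ` in a code `C`. -/
def Tk {V : Type*} (C : Set (Finset V)) (σ : Finset V) : Set (Finset V) :=
  {τ ∈ C | σ ⊆ τ}

/-- The map on codewords defined by the trunks of `σ_1, …, σ_m`. -/
def trunkMap {n m : ℕ} (σ : Fin m → Finset (Fin n)) (c : Finset (Fin n)) :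
    Finset (Fin m) :=
  Finset.univ.filter (fun i => σ i ⊆ c)

section TrunkMap

variable {n m : ℕ} (σ : Fin m → Finset (Fin n))

theorem subset_trunkMap_iff {τ : Finset (Fin m)} {c : Finset (Fin n)} :
    τ ⊆ trunkMap σ c ↔ τ.sup σ ⊆ c := by
  simp only [trunkMap, Finset.subset_iff, Finset.mem_filter, Finset.mem_univ, true_and]
  exact (Finset.sup_le_iff (f := σ)).symm

theorem preimage_trunk_trunkMap (C : Set (Finset (Fin n))) (τ : Finset (Fin m)) :
    {c ∈ C | trunkMap σ c ∈ Tk (trunkMap σ '' C) τ} = Tk C (τ.sup σ) := by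
  ext c
  simp only [Tk, Set.mem_ofPred_eq, subset_trunkMap_iff]
  exact ⟨fun ⟨hc, _, hτ⟩ => ⟨hc, hτ⟩, fun ⟨hc, hτ⟩ => ⟨hc, ⟨Set.mem_image_of_mem _ hc, hτ⟩⟩⟩

end TrunkMap

/-- The map `f(c) = {i : σ_i ⊆ c}` is a morphism of codes from `C` to `f(C)`:
the preimage of every trunk of `f(C)` is a trunk of `C` (possibly empty). -/
theorem stmt4 {n m : ℕ} (C : Set (Finset (Fin n))) (σ : Fin m → Finset (Fin n)) :
    ∀ τ : Finset (Fin m),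
      (∃ ρ : Finset (Fin n),
        {c ∈ C | trunkMap σ c ∈ Tk (trunkMap σ '' C) τ} = Tk C ρ) ∨
      {c ∈ C | trunkMap σ c ∈ Tk (trunkMap σ '' C) τ} = ∅ :=
  fun τ => Or.inl ⟨τ.sup σ, preimage_trunk_trunkMap σ C τ⟩
end

section
/- Let F be a family of subsets of a set X closed under finite intersections and containing the empty set, let U_1,...,U_n ∈ F realize a code C ⊆ 2^{[n]} relative to X, and let f: C → D = f(C) be a surjective code morphism defined by trunks T_1 = Tk_C(σ_1), ..., T_m = Tk_C(σ_m). Define V_j = ∅ if T_j = ∅ and V_j = ∩_{i ∈ σ_j} U_i otherwise. Then V_1,...,V_m ∈ F and code({V_1,...,V_m}, X) = D. -/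
/-- The code of the cover `U` relative to the ambient set `Xs`:
`σ` is a codeword iff `Xs ∩ ⋂_{i∈σ} U_i \ ⋃_{j∉σ} U_j ≠ ∅`. -/
def codeOf {α : Type*} {n : ℕ} (U : Fin n → Set α) (Xs : Set α) :
    Set (Finset (Fin n)) :=
  {σ | ((Xs ∩ ⋂ i ∈ σ, U i) \ ⋃ j, ⋃ (_ : j ∉ σ), U j).Nonempty}

/-- If an intersection-closed family `F` realizes `C` and `f : C → D` is the surjective
morphism defined by trunks `T_j = Tk_C(σ_j)` (with each `σ_j` the largest defining set),
then the sets `V_j = ∅` (if `T_j = ∅`) or `V_j = ⋂_{i∈σ_j} U_i` lie in `F` and realize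
`D = f(C)`. -/
theorem stmt5 {α : Type*} {n m : ℕ} (F : Set (Set α))
    (hempty : ∅ ∈ F) (huniv : Set.univ ∈ F)
    (hinter : ∀ A ∈ F, ∀ B ∈ F, A ∩ B ∈ F)
    (U : Fin n → Set α) (hU : ∀ i, U i ∈ F)
    (C : Set (Finset (Fin n))) (hC : C = codeOf U Set.univ)
    (σs : Fin m → Finset (Fin n))
    (hmax : ∀ j, Tk C (σs j) ≠ ∅ →
      ∀ i : Fin n, (∀ c ∈ Tk C (σs j), i ∈ c) → i ∈ σs j)
    (V : Fin m → Set α)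
    (hV0 : ∀ j, Tk C (σs j) = ∅ → V j = ∅)
    (hV1 : ∀ j, Tk C (σs j) ≠ ∅ → V j = ⋂ i ∈ σs j, U i) :
    (∀ j, V j ∈ F) ∧
      codeOf V Set.univ =
        (fun c => Finset.univ.filter (fun j => σs j ⊆ c)) '' C := by
  classical
  -- auxiliary: finite intersections lie in F
  have hbig : ∀ s : Finset (Fin n), (⋂ i ∈ s, U i) ∈ F := by
    intro s
    induction s using Finset.induction with
    | empty => simpa using huniv
    | insert _ _ hx ih =>
      rw [Finset.set_biInter_insert]
      exact hinter _ (hU _) _ ih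
  -- codeword of a point
  set cw : α → Finset (Fin n) := fun x => Finset.univ.filter (fun i => x ∈ U i) with hcw
  have hcwmem : ∀ x i, i ∈ cw x ↔ x ∈ U i := by
    intro x i; simp [hcw]
  have hcwC : ∀ x, cw x ∈ C := by
    intro x
    rw [hC]
    refine ⟨x, ⟨Set.mem_univ x, ?_⟩, ?_⟩
    · exact Set.mem_iInter₂.2 fun i hi => (hcwmem x i).1 hi
    · intro hx
      obtain ⟨j, hj⟩ := Set.mem_iUnion.1 hx
      obtain ⟨hj1, hj2⟩ := Set.mem_iUnion.1 hj
      exact hj1 ((hcwmem x j).2 hj2)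
  -- key equivalence
  have key : ∀ x j, x ∈ V j ↔ σs j ⊆ cw x := by
    intro x j
    by_cases h : Tk C (σs j) = ∅
    · rw [hV0 j h]
      simp only [Set.mem_empty_iff_false, false_iff]
      intro hsub
      have : cw x ∈ Tk C (σs j) := ⟨hcwC x, hsub⟩
      rw [h] at this
      exact this
    · rw [hV1 j h]
      constructor
      · intro hx i hi
        exact (hcwmem x i).2 (Set.mem_iInter₂.1 hx i hi)
      · intro hsub
        exact Set.mem_iInter₂.2 fun i hi => (hcwmem x i).1 (hsub hi)
  refine ⟨?_, ?_⟩
  · intro j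
    by_cases h : Tk C (σs j) = ∅
    · rw [hV0 j h]; exact hempty
    · rw [hV1 j h]; exact hbig _
  · ext τ
    constructor
    · rintro ⟨x, ⟨-, hx1⟩, hx2⟩
      refine ⟨cw x, hcwC x, ?_⟩
      ext j
      simp only [Finset.mem_filter, Finset.mem_univ, true_and]
      constructor
      · intro hsub
        by_contra hj
        exact hx2 (Set.mem_iUnion.2 ⟨j, Set.mem_iUnion.2 ⟨hj, (key x j).2 hsub⟩⟩)
      · intro hj
        exact (key x j).1 (Set.mem_iInter₂.1 hx1 j hj)
    · rintro ⟨c, hc, rfl⟩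
      rw [hC] at hc
      obtain ⟨x, ⟨-, hx1⟩, hx2⟩ := hc
      have hcwx : cw x = c := by
        ext i
        rw [hcwmem]
        constructor
        · intro hxi
          by_contra hi
          exact hx2 (Set.mem_iUnion.2 ⟨i, Set.mem_iUnion.2 ⟨hi, hxi⟩⟩)
        · intro hi
          exact Set.mem_iInter₂.1 hx1 i hi
      have hxV : ∀ j, x ∈ V j ↔ σs j ⊆ c := by
        intro j; rw [key x j, hcwx]
      refine ⟨x, ⟨Set.mem_univ x, ?_⟩, ?_⟩
      · refine Set.mem_iInter₂.2 fun j hj => ?_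
        simp only [Finset.mem_filter, Finset.mem_univ, true_and] at hj
        exact (hxV j).2 hj
      · intro hx
        obtain ⟨j, hj⟩ := Set.mem_iUnion.1 hx
        obtain ⟨hj1, hj2⟩ := Set.mem_iUnion.1 hj
        simp only [Finset.mem_filter, Finset.mem_univ, true_and] at hj1
        exact hj1 ((hxV j).1 hj2)
end

section
/- Let n ≥ 2, let H_1,...,H_n be hyperplanes in R^d with open half-spaces H_i^+ and H_i^-, fix σ ⊆ [n], and suppose that for every subset τ ⊆ σ the region (∩_{e∈τ} H_e^+) ∩ (∩_{f∈σ\τ} H_f^-) is nonempty. Then ∩_{e∈σ} H_e ≠ ∅. -/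
private lemma stmt12_aux {d n : ℕ}
    (ℓ : Fin n → ((Fin d → ℝ) →ₗ[ℝ] ℝ)) (c : Fin n → ℝ) (σ : Finset (Fin n))
    (h : ∀ τ ⊆ σ, ∃ x : Fin d → ℝ,
      (∀ e ∈ τ, c e < ℓ e x) ∧ ∀ f ∈ σ \ τ, ℓ f x < c f)
    (b : Fin n → ℝ) (hbker : ∀ x, ∑ e ∈ σ, ℓ e x * b e = 0)
    (hbpos : 0 < ∑ e ∈ σ, c e * b e) : False := by
  obtain ⟨x, hx1, hx2⟩ := h (σ.filter (fun e => 0 < b e)) (Finset.filter_subset _ _)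
  have hsum : ∑ e ∈ σ, (ℓ e x - c e) * b e = -(∑ e ∈ σ, c e * b e) := by
    have := hbker x
    simp only [sub_mul]
    rw [Finset.sum_sub_distrib, this]
    ring
  have hnn : 0 ≤ ∑ e ∈ σ, (ℓ e x - c e) * b e := by
    refine Finset.sum_nonneg fun e he => ?_
    by_cases hb : 0 < b e
    · have := hx1 e (Finset.mem_filter.mpr ⟨he, hb⟩)
      nlinarith
    · have hb' : b e ≤ 0 := le_of_not_gt hb
      have : ℓ e x < c e := hx2 e (by
        simp [Finset.mem_sdiff, Finset.mem_filter, he, hb])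
      nlinarith
  rw [hsum] at hnn
  linarith

/-- If all `2^{|σ|}` open orthants cut out by the hyperplanes `{H_e}_{e∈σ}`
(where `H_e = {ℓ_e = c_e}`, `H_e^+ = {ℓ_e > c_e}`, `H_e^- = {ℓ_e < c_e}`)
are nonempty, then the hyperplanes indexed by `σ` have a common point. -/
theorem stmt12 {d n : ℕ} (hn : 2 ≤ n)
    (ℓ : Fin n → ((Fin d → ℝ) →ₗ[ℝ] ℝ)) (c : Fin n → ℝ) (σ : Finset (Fin n))
    (h : ∀ τ ⊆ σ, ∃ x : Fin d → ℝ,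
      (∀ e ∈ τ, c e < ℓ e x) ∧ ∀ f ∈ σ \ τ, ℓ f x < c f) :
    ∃ x : Fin d → ℝ, ∀ e ∈ σ, ℓ e x = c e := by
  by_contra hno
  push_neg at hno
  set L : (Fin d → ℝ) →ₗ[ℝ] (Fin n → ℝ) := LinearMap.pi
    (fun e => if e ∈ σ then ℓ e else 0) with hL
  set c' : Fin n → ℝ := fun e => if e ∈ σ then c e else 0 with hc'
  have hcmem : c' ∉ LinearMap.range L := by
    rintro ⟨x, hx⟩
    obtain ⟨e, he, hne⟩ := hno x
    have := congrFun hx e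
    simp [hL, hc', he, LinearMap.pi_apply] at this
    exact hne this
  obtain ⟨f, hf0, hfbot⟩ := (LinearMap.range L).exists_dual_map_eq_bot_of_notMem hcmem inferInstance
  set a : Fin n → ℝ := fun e => f (fun j => if e = j then 1 else 0) with ha
  have hfsum : ∀ y : Fin n → ℝ, f y = ∑ i, y i * a i := by
    intro y
    rw [LinearMap.pi_apply_eq_sum_univ f y]
    simp [ha, smul_eq_mul]
  have hker : ∀ x : Fin d → ℝ, ∑ e ∈ σ, ℓ e x * a e = 0 := by
    intro x
    have hmem : f (L x) = 0 := by
      have : f (L x) ∈ (LinearMap.range L).map f :=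
        Submodule.mem_map_of_mem (LinearMap.mem_range_self L x)
      rwa [hfbot, Submodule.mem_bot] at this
    rw [hfsum] at hmem
    rw [← hmem]
    rw [← Finset.sum_subset (Finset.subset_univ σ)]
    · refine Finset.sum_congr rfl fun e he => ?_
      simp [hL, LinearMap.pi_apply, he]
    · intro e _ he
      simp [hL, LinearMap.pi_apply, he]
  have hcsum : ∑ e ∈ σ, c e * a e ≠ 0 := by
    rw [hfsum] at hf0
    intro hc0
    apply hf0
    rw [← Finset.sum_subset (Finset.subset_univ σ)]
    · rw [← hc0]; exact Finset.sum_congr rfl fun e he => by simp [hc', he]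
    · intro e _ he; simp [hc', he]
  rcases hcsum.lt_or_gt with hneg | hpos
  · refine stmt12_aux ℓ c σ h (fun e => -(a e)) (fun x => ?_) ?_
    · simp only [mul_neg, Finset.sum_neg_distrib, hker x, neg_zero]
    · simp only [mul_neg, Finset.sum_neg_distrib]
      linarith
  · exact stmt12_aux ℓ c σ h a hker hpos
end
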